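/- For a lattice basis B with Gram-Schmidt vectors b̂ᵢ and dual basis B* = (B^{-1})^H J (J the column-reversing matrix), the Gram-Schmidt vectors of the dual satisfy ‖b̂ᵢ‖ = ‖b̂*_{n-i+1}‖^{-1} for all i; consequently A/a = A*/a*, where A, a (resp. A*, a*) are the max and min squared Gram-Schmidt norms of B (resp. B*). -/

import Mathlib

/-- The `i`-th column of a complex matrix, as a vector of `ℂⁿ`. -/
noncomputable def col {n : ℕ} (B : Matrix (Fin n) (Fin n) ℂ) (i : Fin n) :
    EuclideanSpace ℂ (Fin n) :=
  (WithLp.equiv 2 (Fin n → ℂ)).symm (fun x => B x i)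

/-- Gram-Schmidt orthogonalization of a family of vectors in ℂⁿ. -/
noncomputable def gso {n : ℕ} (b : Fin n → EuclideanSpace ℂ (Fin n)) :
    Fin n → EuclideanSpace ℂ (Fin n) :=
  @InnerProductSpace.gramSchmidt ℂ _ _ _ _ (Fin n) _ _ (inferInstance : WellFoundedLT (Fin n)) b

/-- Gram-Schmidt coefficient μ_{i,j} = ⟨bᵢ, b̂ⱼ⟩ / ‖b̂ⱼ‖². -/
noncomputable def mu {n : ℕ} (b : Fin n → EuclideanSpace ℂ (Fin n)) (i j : Fin n) : ℂ :=
  (inner ℂ (gso b j) (b i) : ℂ) / ((‖gso b j‖ ^ 2 : ℝ) : ℂ)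

/-- B is complex LLL-reduced with parameter δ: size-reduced plus the Lovász condition. -/
def LLLReduced {n : ℕ} (δ : ℝ) (b : Fin n → EuclideanSpace ℂ (Fin n)) : Prop :=
  (∀ i j : Fin n, j < i → |(mu b i j).re| ≤ 1/2 ∧ |(mu b i j).im| ≤ 1/2) ∧
  (∀ i j : Fin n, j.val + 1 = i.val →
    ‖gso b i‖^2 ≥ (δ - ‖mu b i j‖ ^ 2) * ‖gso b j‖^2)

/-- The column-reversing permutation matrix J. -/
def Jmat (n : ℕ) : Matrix (Fin n) (Fin n) ℂ :=
  fun x y => if Fin.rev x = y then 1 else 0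

/-!
Write `b` for the columns of `B` and `d` for those of `(B⁻¹)ᴴ`, so that `⟪bⱼ, dₖ⟫ = δⱼₖ`; the
columns of `B*` are `dₙ, …, d₁`. Gram-Schmidt vector `k` of a family is the unique `v` orthogonal
to the earlier vectors with `fₖ - v` in their span. For `v = b̂ᵢ / ‖b̂ᵢ‖²`, the earlier vectors of the
reversed dual family are the `dₖ` with `k > i`: `v` is orthogonal to them because
`b̂ᵢ ∈ span (b₁, …, bᵢ)`, and `dᵢ - v` lies in their span because `⟪bₖ, dᵢ - v⟫ = 0` for `k ≤ i`
(`⟪bᵢ, b̂ᵢ⟫ = ‖b̂ᵢ‖²`). Hence `‖b̂*ₙ₋ᵢ₊₁‖ = ‖b̂ᵢ‖⁻¹`; inverting and reversing the squared norms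
exchanges maximum and minimum, so `A*/a* = a⁻¹/A⁻¹ = A/a`.
-/

open Finset Submodule InnerProductSpace
open scoped Matrix

section InnerProduct

variable {𝕜 E : Type*} [RCLike 𝕜] [NormedAddCommGroup E] [InnerProductSpace 𝕜 E]

local notation "⟪" x ", " y "⟫" => inner 𝕜 x y

theorem Submodule.mem_orthogonal_span_iff {s : Set E} {v : E} :
    v ∈ (span 𝕜 s)ᗮ ↔ ∀ u ∈ s, ⟪u, v⟫ = 0 := by
  rw [← span_singleton_le_iff_mem, ← isOrtho_iff_le, isOrtho_comm, isOrtho_span]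
  simp

section GramSchmidt

variable {ι : Type*} [LinearOrder ι] [LocallyFiniteOrderBot ι] [WellFoundedLT ι]

theorem gramSchmidt_eq_of_sub_mem_span {f : ι → E} {k : ι} {v : E}
    (hmem : f k - v ∈ span 𝕜 (f '' Set.Iio k)) (horth : ∀ j < k, ⟪f j, v⟫ = 0) :
    gramSchmidt 𝕜 f k = v := by
  set S := span 𝕜 (f '' Set.Iio k) with hS
  have hgs_mem : f k - gramSchmidt 𝕜 f k ∈ S := by
    rw [gramSchmidt_def 𝕜 f k, sub_sub_cancel, hS, ← span_gramSchmidt_Iio]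
    refine sum_mem fun j hj => ?_
    rw [starProjection_singleton]
    exact smul_mem _ _ (subset_span (Set.mem_image_of_mem _ (mem_Iio.1 hj)))
  have hgs_orth : gramSchmidt 𝕜 f k ∈ Sᗮ := mem_orthogonal_span_iff.2 <| by
    rintro _ ⟨j, hj, rfl⟩
    exact inner_eq_zero_symm.1 (gramSchmidt_inv_triangular 𝕜 f hj)
  have hv_orth : v ∈ Sᗮ := mem_orthogonal_span_iff.2 <| by
    rintro _ ⟨j, hj, rfl⟩
    exact horth j hj
  have hdiff : gramSchmidt 𝕜 f k - v ∈ S ⊓ Sᗮ :=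
    ⟨by simpa using sub_mem hmem hgs_mem, sub_mem hgs_orth hv_orth⟩
  rwa [inf_orthogonal_eq_bot, mem_bot, sub_eq_zero] at hdiff

theorem inner_gramSchmidt_self (f : ι → E) (i : ι) :
    ⟪gramSchmidt 𝕜 f i, f i⟫ = (‖gramSchmidt 𝕜 f i‖ : 𝕜) ^ 2 := by
  conv_lhs => rw [gramSchmidt_def'' 𝕜 f i]
  rw [inner_add_right, inner_self_eq_norm_sq_to_K, inner_sum, add_eq_left]
  refine sum_eq_zero fun j hj => ?_
  rw [inner_smul_right, gramSchmidt_orthogonal 𝕜 f (mem_Iio.1 hj).ne', mul_zero]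

end GramSchmidt

section Biorthogonal

variable {ι : Type*} [Fintype ι] [DecidableEq ι] (b : Module.Basis ι 𝕜 E) {d : ι → E}

theorem Module.Basis.sum_inner_smul_of_biorthogonal
    (hbd : ∀ j k, ⟪b j, d k⟫ = if j = k then 1 else 0) (w : E) :
    ∑ k, ⟪b k, w⟫ • d k = w :=
  ext_inner_left_basis b fun j => by simp [inner_sum, inner_smul_right, hbd]

theorem Module.Basis.mem_span_image_of_biorthogonal
    (hbd : ∀ j k, ⟪b j, d k⟫ = if j = k then 1 else 0) {s : Set ι} {w : E}
    (hw : ∀ k ∉ s, ⟪b k, w⟫ = 0) : w ∈ span 𝕜 (d '' s) := by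
  rw [← b.sum_inner_smul_of_biorthogonal hbd w]
  refine sum_mem fun k _ => ?_
  by_cases hk : k ∈ s
  · exact smul_mem _ _ (subset_span (Set.mem_image_of_mem d hk))
  · simp [hw k hk]

end Biorthogonal

section DualReversed

variable {n : ℕ} (b : Module.Basis (Fin n) 𝕜 E) {d : Fin n → E}

theorem gramSchmidt_biorthogonal_rev
    (hbd : ∀ j k, ⟪b j, d k⟫ = if j = k then 1 else 0) (i : Fin n) :
    gramSchmidt 𝕜 (d ∘ Fin.rev) (Fin.rev i) =
      ((‖gramSchmidt 𝕜 b i‖ : 𝕜) ^ 2)⁻¹ • gramSchmidt 𝕜 b i := by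
  set g := gramSchmidt 𝕜 b i
  have hg : (‖g‖ : 𝕜) ^ 2 ≠ 0 := by
    simpa using gramSchmidt_ne_zero i b.linearIndependent
  have hb_inner : ∀ k ≤ i, ⟪b k, ((‖g‖ : 𝕜) ^ 2)⁻¹ • g⟫ = if k = i then 1 else 0 := by
    intro k hk
    rcases hk.lt_or_eq with hki | rfl
    · rw [inner_smul_right, inner_eq_zero_symm.1 (gramSchmidt_inv_triangular 𝕜 b hki),
        mul_zero, if_neg hki.ne]
    · rw [inner_smul_right, ← inner_conj_symm, inner_gramSchmidt_self]
      simpa using inv_mul_cancel₀ hg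
  have hd_inner : ∀ k, i < k → ⟪d k, g⟫ = 0 := by
    intro k hik
    refine inner_left_of_mem_orthogonal (gramSchmidt_mem_span 𝕜 b le_rfl)
      (mem_orthogonal_span_iff.2 ?_)
    rintro _ ⟨m, hm, rfl⟩
    rw [hbd, if_neg (hm.trans_lt hik).ne]
  apply gramSchmidt_eq_of_sub_mem_span
  · rw [Set.image_comp, Fin.image_rev, Fin.preimage_rev_Iio, Fin.rev_rev]
    refine b.mem_span_image_of_biorthogonal hbd fun k hk => ?_
    rw [Function.comp_apply, Fin.rev_rev, inner_sub_right, hbd, hb_inner k (not_lt.1 hk), sub_self]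
  · intro j hj
    rw [Function.comp_apply, inner_smul_right, hd_inner _ (Fin.lt_rev_iff.1 hj), mul_zero]

theorem norm_gramSchmidt_eq_inv_norm_gramSchmidt_biorthogonal_rev
    (hbd : ∀ j k, ⟪b j, d k⟫ = if j = k then 1 else 0) (i : Fin n) :
    ‖gramSchmidt 𝕜 b i‖ = ‖gramSchmidt 𝕜 (d ∘ Fin.rev) (Fin.rev i)‖⁻¹ := by
  have hg : ‖gramSchmidt 𝕜 b i‖ ≠ 0 := by
    simpa using gramSchmidt_ne_zero i b.linearIndependent
  rw [gramSchmidt_biorthogonal_rev b hbd, norm_smul, norm_inv, norm_pow, RCLike.norm_ofReal,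
    abs_norm]
  field_simp

end DualReversed

end InnerProduct

section Ratio

variable {ι : Type*}

theorem Finset.sup'_univ_comp_equiv [Fintype ι] {α : Type*} [SemilatticeSup α]
    (hne : univ.Nonempty) (e : ι ≃ ι) (f : ι → α) :
    univ.sup' hne (f ∘ e) = univ.sup' hne f := by
  refine le_antisymm (sup'_le _ _ fun i _ => le_sup' f (mem_univ (e i)))
    (sup'_le _ _ fun i _ => ?_)
  have := le_sup' (f ∘ e) (mem_univ (e.symm i))
  rwa [Function.comp_apply, e.apply_symm_apply] at this

theorem Finset.inf'_univ_comp_equiv [Fintype ι] {α : Type*} [SemilatticeInf α]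
    (hne : univ.Nonempty) (e : ι ≃ ι) (f : ι → α) :
    univ.inf' hne (f ∘ e) = univ.inf' hne f :=
  sup'_univ_comp_equiv (α := αᵒᵈ) hne e f

variable {s : Finset ι} (hs : s.Nonempty) {u : ι → ℝ}

theorem Finset.sup'_inv_eq_inv_inf' (hu : ∀ i ∈ s, 0 < u i) :
    s.sup' hs (fun i => (u i)⁻¹) = (s.inf' hs u)⁻¹ := by
  obtain ⟨i, hi, hmin⟩ := exists_mem_eq_inf' hs u
  refine le_antisymm (sup'_le _ _ fun j hj => ?_) (hmin ▸ le_sup' (fun i => (u i)⁻¹) hi)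
  exact inv_anti₀ ((lt_inf'_iff hs).2 hu) (inf'_le _ hj)

theorem Finset.inf'_inv_eq_inv_sup' (hu : ∀ i ∈ s, 0 < u i) :
    s.inf' hs (fun i => (u i)⁻¹) = (s.sup' hs u)⁻¹ := by
  have := sup'_inv_eq_inv_inf' hs (u := fun i => (u i)⁻¹) fun i hi => inv_pos.2 (hu i hi)
  simp only [inv_inv] at this
  rw [this, inv_inv]

theorem Finset.sup'_div_inf'_inv_comp_equiv [Fintype ι] (hne : univ.Nonempty) (e : ι ≃ ι)
    (hu : ∀ i ∈ univ, 0 < u i) :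
    univ.sup' hne ((fun i => (u i)⁻¹) ∘ e) / univ.inf' hne ((fun i => (u i)⁻¹) ∘ e) =
      univ.sup' hne u / univ.inf' hne u := by
  rw [sup'_univ_comp_equiv, inf'_univ_comp_equiv, sup'_inv_eq_inv_inf' _ hu,
    inf'_inv_eq_inv_sup' _ hu, inv_div_inv]

end Ratio

section Matrix

variable {n : ℕ}

theorem gso_eq_gramSchmidt (b : Fin n → EuclideanSpace ℂ (Fin n)) : gso b = gramSchmidt ℂ b :=
  rfl

theorem col_mul_Jmat (M : Matrix (Fin n) (Fin n) ℂ) : col (M * Jmat n) = col M ∘ Fin.rev := by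
  funext j
  ext x
  simp [col, Jmat, Matrix.mul_apply, Fin.rev_eq_iff]

theorem inner_col_col (M N : Matrix (Fin n) (Fin n) ℂ) (j k : Fin n) :
    inner ℂ (col M j) (col N k) = (Mᴴ * N) j k := by
  simp [col, PiLp.inner_apply, Matrix.mul_apply, mul_comm]

theorem inner_col_col_conjTranspose_inv {B : Matrix (Fin n) (Fin n) ℂ} (hB : IsUnit B.det)
    (j k : Fin n) : inner ℂ (col B j) (col B⁻¹ᴴ k) = if j = k then 1 else 0 := by
  rw [inner_col_col, ← Matrix.conjTranspose_mul, Matrix.nonsing_inv_mul B hB,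
    Matrix.conjTranspose_one, Matrix.one_apply]

theorem linearIndependent_col {B : Matrix (Fin n) (Fin n) ℂ} (hB : IsUnit B.det) :
    LinearIndependent ℂ (col B) :=
  (Matrix.linearIndependent_cols_iff_isUnit.2 ((Matrix.isUnit_iff_isUnit_det B).2 hB)).map'
    (WithLp.linearEquiv 2 ℂ (Fin n → ℂ)).symm.toLinearMap (LinearEquiv.ker _)

end Matrix

theorem stmt15 (n : ℕ) (hn : 0 < n) (B : Matrix (Fin n) (Fin n) ℂ) (hB : IsUnit B.det) :
    (∀ i : Fin n,
      ‖gso (col B) i‖ = ‖gso (col (B⁻¹.conjTranspose * Jmat n)) (Fin.rev i)‖⁻¹) ∧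
    (Finset.sup' Finset.univ ⟨⟨0, hn⟩, Finset.mem_univ _⟩ (fun m => ‖gso (col B) m‖^2)) /
      (Finset.inf' Finset.univ ⟨⟨0, hn⟩, Finset.mem_univ _⟩ (fun m => ‖gso (col B) m‖^2)) =
    (Finset.sup' Finset.univ ⟨⟨0, hn⟩, Finset.mem_univ _⟩
        (fun m => ‖gso (col (B⁻¹.conjTranspose * Jmat n)) m‖^2)) /
      (Finset.inf' Finset.univ ⟨⟨0, hn⟩, Finset.mem_univ _⟩
        (fun m => ‖gso (col (B⁻¹.conjTranspose * Jmat n)) m‖^2)) := by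
  let b := basisOfLinearIndependentOfCardEqFinrank' _ (linearIndependent_col hB) (by simp)
  have hb : ⇑b = col B := coe_basisOfLinearIndependentOfCardEqFinrank' _ _ _
  have hbd : ∀ j k, inner ℂ (b j) (col B⁻¹ᴴ k) = if j = k then 1 else 0 :=
    hb ▸ inner_col_col_conjTranspose_inv hB
  have hnorm := norm_gramSchmidt_eq_inv_norm_gramSchmidt_biorthogonal_rev b hbd
  rw [hb, ← col_mul_Jmat] at hnorm
  refine ⟨hnorm, ?_⟩
  have hdual : (fun m => ‖gso (col (B⁻¹ᴴ * Jmat n)) m‖ ^ 2) =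
      (fun m => (‖gso (col B) m‖ ^ 2)⁻¹) ∘ Fin.revPerm := by
    funext m
    rw [Function.comp_apply, Fin.revPerm_apply, gso_eq_gramSchmidt, gso_eq_gramSchmidt,
      hnorm, Fin.rev_rev, inv_pow, inv_inv]
  have hpos : ∀ m ∈ univ, 0 < ‖gso (col B) m‖ ^ 2 := fun m _ => by
    rw [gso_eq_gramSchmidt, ← hb]
    exact pow_pos (norm_pos_iff.2 (gramSchmidt_ne_zero m b.linearIndependent)) 2
  rw [hdual]
  exact (sup'_div_inf'_inv_comp_equiv _ _ hpos).symm
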